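/- Monotonicity of expectiles under convex order for levels at least 1/2: if X ≤_cx Y (i.e. E[u(X)] ≤ E[u(Y)] for every convex u for which both expectations exist), then e_γ(X) ≤ e_γ(Y) for every γ ∈ [1/2, 1). -/

import Mathlib

open MeasureTheory ProbabilityTheory Real Set

/-- Asymmetric squared-loss objective whose minimizer is the `γ`-expectile. -/
noncomputable def phi {Ω : Type*} [MeasurableSpace Ω] (μ : Measure Ω) (γ : ℝ)
    (X : Ω → ℝ) (y : ℝ) : ℝ :=
  γ * ∫ ω, (max (X ω - y) 0) ^ 2 ∂μ + (1 - γ) * ∫ ω, (max (y - X ω) 0) ^ 2 ∂μ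

/-- `e` is the γ-expectile of `X` under `μ`: the unique minimizer of `phi`. -/
def IsExpectile {Ω : Type*} [MeasurableSpace Ω] (μ : Measure Ω) (γ : ℝ)
    (X : Ω → ℝ) (e : ℝ) : Prop :=
  (∀ y, phi μ γ X e ≤ phi μ γ X y) ∧ ∀ y, (∀ z, phi μ γ X y ≤ phi μ γ X z) → y = e

/-!
Write `s_y(x) = γ (x - y)⁺ - (1 - γ) (y - x)⁺`. The loss `phi μ γ X` satisfies
`phi (e + h) ≤ phi e - 2 h E[s_e(X)] + h²`, so at a minimizer `e` the first-order condition
`E[s_e(X)] = 0` holds. For `γ ≥ 1/2`, `s_y(x) = max (γ (x - y)) ((1 - γ) (x - y))` is convex, so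
`E[s_{e_γ(Y)}(X)] ≤ E[s_{e_γ(Y)}(Y)] = 0`. As `y ↦ E[s_y(X)]` decreases with slope at least
`1 - γ > 0` and vanishes at `e_γ(X)`, this forces `e_γ(X) ≤ e_γ(Y)`.
-/

def expectileScore (γ y x : ℝ) : ℝ :=
  γ * max (x - y) 0 - (1 - γ) * max (y - x) 0

def expectileLoss (γ y x : ℝ) : ℝ :=
  γ * max (x - y) 0 ^ 2 + (1 - γ) * max (y - x) 0 ^ 2

section Pointwise

variable {γ : ℝ}

lemma expectileScore_eq_max (hγ : 1 / 2 ≤ γ) (y x : ℝ) :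
    expectileScore γ y x = max (γ * (x - y)) ((1 - γ) * (x - y)) := by
  unfold expectileScore
  rcases le_total x y with h | h
  · rw [max_eq_right (a := x - y) (by linarith), max_eq_left (a := y - x) (by linarith),
      max_eq_right (by nlinarith)]
    ring
  · rw [max_eq_left (a := x - y) (by linarith), max_eq_right (a := y - x) (by linarith),
      max_eq_left (by nlinarith)]
    ring

lemma expectileScore_convexOn (hγ : 1 / 2 ≤ γ) (y : ℝ) :
    ConvexOn ℝ univ (expectileScore γ y) := by
  have hlin : ∀ c : ℝ, ConvexOn ℝ univ fun x : ℝ => c * (x - y) := fun c =>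
    ⟨convex_univ, fun x _ z _ a b _ _ hab => by
      simp only [smul_eq_mul]
      exact le_of_eq (by linear_combination (c * y) * hab)⟩
  rw [funext (expectileScore_eq_max hγ y)]
  exact (hlin γ).sup (hlin (1 - γ))

lemma expectileScore_add_le_of_le (hγ : 1 / 2 ≤ γ) {y y' : ℝ} (hy : y ≤ y') (x : ℝ) :
    expectileScore γ y' x + (1 - γ) * (y' - y) ≤ expectileScore γ y x := by
  unfold expectileScore
  rcases le_total x y with h | h <;> rcases le_total x y' with h' | h' <;>
    simp only [max_eq_left, max_eq_right, sub_nonneg, sub_nonpos, h, h'] <;> nlinarith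

/-- The loss is `C¹` in `y` with `2`-Lipschitz derivative `-2 • expectileScore`. -/
lemma expectileLoss_add_le (hγ : γ ∈ Icc (0 : ℝ) 1) (y h x : ℝ) :
    expectileLoss γ (y + h) x ≤ expectileLoss γ y x - 2 * h * expectileScore γ y x + h ^ 2 := by
  obtain ⟨hγ₀, hγ₁⟩ := hγ
  have hγ₁' : 0 ≤ 1 - γ := sub_nonneg.2 hγ₁
  unfold expectileLoss expectileScore
  rcases le_total x y with h₁ | h₁ <;> rcases le_total x (y + h) with h₂ | h₂ <;>
    simp only [max_eq_left, max_eq_right, sub_nonneg, sub_nonpos, h₁, h₂]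
  · nlinarith [mul_nonneg hγ₁' (sq_nonneg h)]
  · have ha : 0 ≤ y - x := by linarith
    have hb : 0 ≤ x - (y + h) := by linarith
    nlinarith [mul_nonneg hγ₁' (sq_nonneg (x - y - h)), mul_nonneg (mul_nonneg hγ₀ ha) ha,
      mul_nonneg (mul_nonneg hγ₀ ha) hb]
  · have ha : 0 ≤ x - y := by linarith
    have hb : 0 ≤ y + h - x := by linarith
    nlinarith [mul_nonneg hγ₀ (sq_nonneg (x - y - h)), mul_nonneg (mul_nonneg hγ₁' ha) ha,
      mul_nonneg (mul_nonneg hγ₁' ha) hb]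
  · nlinarith [mul_nonneg hγ₀ (sq_nonneg h)]

end Pointwise

section Integral

variable {Ω : Type*} [MeasurableSpace Ω] {μ : Measure Ω} {γ : ℝ} {X : Ω → ℝ}

lemma integrable_expectileScore [IsFiniteMeasure μ] (hX : Integrable X μ) (γ y : ℝ) :
    Integrable (fun ω => expectileScore γ y (X ω)) μ :=
  ((hX.sub (integrable_const y)).pos_part.const_mul γ).sub
    (((integrable_const y).sub hX).pos_part.const_mul (1 - γ))

lemma integrable_expectileLoss [IsFiniteMeasure μ] (hX : MemLp X 2 μ) (γ y : ℝ) :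
    Integrable (fun ω => expectileLoss γ y (X ω)) μ :=
  ((hX.sub (memLp_const y)).pos_part.integrable_sq.const_mul γ).add
    (((memLp_const y).sub hX).pos_part.integrable_sq.const_mul (1 - γ))

lemma phi_eq_integral_expectileLoss [IsFiniteMeasure μ] (hX : MemLp X 2 μ) (γ y : ℝ) :
    phi μ γ X y = ∫ ω, expectileLoss γ y (X ω) ∂μ := by
  unfold phi expectileLoss
  rw [integral_add, integral_const_mul, integral_const_mul]
  exacts [(hX.sub (memLp_const y)).pos_part.integrable_sq.const_mul γ,
    ((memLp_const y).sub hX).pos_part.integrable_sq.const_mul (1 - γ)]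

variable [IsProbabilityMeasure μ]

lemma integral_expectileScore_eq_zero_of_forall_phi_le (hX : MemLp X 2 μ)
    (hγ : γ ∈ Icc (0 : ℝ) 1) {e : ℝ} (he : ∀ y, phi μ γ X e ≤ phi μ γ X y) :
    ∫ ω, expectileScore γ e (X ω) ∂μ = 0 := by
  set s := ∫ ω, expectileScore γ e (X ω) ∂μ
  have hs := integrable_expectileScore (hX.integrable one_le_two) γ e
  have hl := integrable_expectileLoss hX γ e
  have hdescent : ∀ h, phi μ γ X (e + h) ≤ phi μ γ X e - 2 * h * s + h ^ 2 := fun h => by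
    rw [phi_eq_integral_expectileLoss hX, phi_eq_integral_expectileLoss hX]
    calc ∫ ω, expectileLoss γ (e + h) (X ω) ∂μ
        ≤ ∫ ω, (expectileLoss γ e (X ω) - 2 * h * expectileScore γ e (X ω) + h ^ 2) ∂μ :=
          integral_mono (integrable_expectileLoss hX γ _)
            ((hl.sub (hs.const_mul _)).add (integrable_const _))
            fun ω => expectileLoss_add_le hγ e h (X ω)
      _ = _ := by
          rw [integral_add, integral_sub, integral_const_mul, integral_const, probReal_univ,
            one_smul]
          exacts [hl, hs.const_mul _, hl.sub (hs.const_mul _), integrable_const _]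
  have hsq : s ^ 2 ≤ 0 := by linarith [(he (e + s)).trans (hdescent s)]
  exact pow_eq_zero_iff two_ne_zero |>.1 (le_antisymm hsq (sq_nonneg s))

lemma integral_expectileScore_add_le_of_le (hX : Integrable X μ) (hγ : 1 / 2 ≤ γ) {y y' : ℝ}
    (hy : y ≤ y') :
    ∫ ω, expectileScore γ y' (X ω) ∂μ + (1 - γ) * (y' - y) ≤
      ∫ ω, expectileScore γ y (X ω) ∂μ := by
  have hs := integrable_expectileScore hX γ y'
  calc ∫ ω, expectileScore γ y' (X ω) ∂μ + (1 - γ) * (y' - y)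
      = ∫ ω, (expectileScore γ y' (X ω) + (1 - γ) * (y' - y)) ∂μ := by
        rw [integral_add hs (integrable_const _), integral_const, probReal_univ, one_smul]
    _ ≤ _ := integral_mono (hs.add (integrable_const _)) (integrable_expectileScore hX γ y)
        fun ω => expectileScore_add_le_of_le hγ hy (X ω)

end Integral

theorem expectile_monotone_of_convex_order
    {Ω : Type*} [MeasurableSpace Ω] (μ : Measure Ω) [IsProbabilityMeasure μ]
    (X Y : Ω → ℝ) (hX : MemLp X 2 μ) (hY : MemLp Y 2 μ)
    (hcx : ∀ u : ℝ → ℝ, ConvexOn ℝ Set.univ u →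
      Integrable (fun ω => u (X ω)) μ → Integrable (fun ω => u (Y ω)) μ →
      ∫ ω, u (X ω) ∂μ ≤ ∫ ω, u (Y ω) ∂μ)
    (γ : ℝ) (hγ : γ ∈ Set.Ico (1/2 : ℝ) 1)
    (eX eY : ℝ) (heX : IsExpectile μ γ X eX) (heY : IsExpectile μ γ Y eY) :
    eX ≤ eY := by
  obtain ⟨hγ₁, hγ₂⟩ := hγ
  have hγ' : γ ∈ Icc (0 : ℝ) 1 := ⟨by linarith, hγ₂.le⟩
  have hX₀ := integral_expectileScore_eq_zero_of_forall_phi_le hX hγ' heX.1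
  have hY₀ := integral_expectileScore_eq_zero_of_forall_phi_le hY hγ' heY.1
  have hXY := hcx _ (expectileScore_convexOn hγ₁ eY)
    (integrable_expectileScore (hX.integrable one_le_two) γ eY)
    (integrable_expectileScore (hY.integrable one_le_two) γ eY)
  by_contra! hlt
  have hgap := integral_expectileScore_add_le_of_le (hX.integrable one_le_two) hγ₁ hlt.le
  linarith [mul_pos (sub_pos.2 hγ₂) (sub_pos.2 hlt)]
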